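/- arXiv:2004.08437 — 2 statements merged into one kernel-verified Lean document; each statement's English description precedes it below -/
import Mathlib

section
/- Let μ1, μ2, μ3, μ4 be nonzero real numbers and let θ2 ∈ (0, 2π) with θ2 ≠ π. If (0, θ2, π, −θ2) is a critical point of V, then μ2 = μ4. (In other words, in any kite configuration the two vortices not on the axis of symmetry must have equal circulation parameters.) -/
open Real Polynomial

/-- The potential `V` for the (1+4)-vortex problem with circulation
parameters `μ` and angular positions `θ`. -/
noncomputable def V (μ θ : Fin 4 → ℝ) : ℝ :=
  -∑ i : Fin 4, ∑ j ∈ Finset.Ioi i,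
      μ i * μ j *
        (Real.cos (θ i - θ j) + (1 / 2) * Real.log (2 - 2 * Real.cos (θ i - θ j)))

/-- The partial derivative `∂V/∂θ_k` at the point `θ`. -/
noncomputable def partialV (μ θ : Fin 4 → ℝ) (k : Fin 4) : ℝ :=
  deriv (fun t => V μ (Function.update θ k t)) (θ k)

/-- `θ` is a critical point of `V`: all four partial derivatives vanish. -/
def IsCriticalPt (μ θ : Fin 4 → ℝ) : Prop :=
  ∀ k : Fin 4, partialV μ θ k = 0

/-- The Hessian matrix of `V` at `θ`, `H k l = ∂²V/∂θ_k ∂θ_l`. -/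
noncomputable def hessV (μ θ : Fin 4 → ℝ) : Matrix (Fin 4) (Fin 4) ℝ :=
  fun k l => deriv (fun t => partialV μ (Function.update θ k t) l) (θ k)

/-!
Moving only `θ_k` turns each pair term of `V` into `pairPotential` of an affine function of `θ_k`,
so `∂V/∂θ_k` is a signed sum of values of its derivative `pairForce`, which is odd, `2π`-periodic
and vanishes at `π`. At the kite the equations for the two vortices on the axis collapse to
`μ₁ (μ₂ - μ₄) pairForce θ₂ = 0` and `μ₃ (μ₂ - μ₄) pairForce (θ₂ + π) = 0`, and these two values
of `pairForce` cannot both vanish: that would force `cos θ₂ = 1/2` and `cos θ₂ = -1/2`.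
-/

noncomputable def pairPotential (x : ℝ) : ℝ := cos x + (1 / 2) * log (2 - 2 * cos x)

noncomputable def pairForce (x : ℝ) : ℝ := sin x * (2 * cos x - 1) / (2 - 2 * cos x)

theorem hasDerivAt_pairPotential {x : ℝ} (hx : cos x ≠ 1) :
    HasDerivAt pairPotential (pairForce x) x := by
  have hden : 2 - 2 * cos x ≠ 0 := fun h => hx (by linarith)
  have hlog := ((hasDerivAt_cos x).const_mul 2 |>.const_sub 2).log hden
  refine ((hasDerivAt_cos x).fun_add (hlog.const_mul (1 / 2))).congr_deriv ?_
  rw [pairForce]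
  field_simp
  ring

theorem pairForce_neg (x : ℝ) : pairForce (-x) = -pairForce x := by
  simp only [pairForce, sin_neg, cos_neg]; ring

theorem pairForce_pi : pairForce π = 0 := by simp [pairForce]

theorem pairForce_sub_pi (x : ℝ) : pairForce (x - π) = pairForce (x + π) := by
  simp [pairForce, sin_sub_pi, cos_sub_pi, sin_add_pi, cos_add_pi]

theorem sin_eq_zero_of_pairForce_eq_zero {x : ℝ} (h : pairForce x = 0)
    (hπ : pairForce (x + π) = 0) : sin x = 0 := by
  by_contra hsin
  have hc := sin_sq_add_cos_sq x
  have hc1 : 2 - 2 * cos x ≠ 0 := fun h => hsin (by nlinarith)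
  have hc2 : 2 + 2 * cos x ≠ 0 := fun h => hsin (by nlinarith)
  rw [pairForce, div_eq_zero_iff, mul_eq_zero, or_iff_left hc1, or_iff_right hsin] at h
  rw [pairForce, sin_add_pi, cos_add_pi, div_eq_zero_iff, mul_eq_zero, neg_eq_zero,
    or_iff_left (by linarith), or_iff_right hsin] at hπ
  linarith

def CollisionFree {ι : Type*} (θ : ι → ℝ) : Prop := ∀ i j, i ≠ j → cos (θ i - θ j) ≠ 1

theorem update_sub_update {ι : Type*} [DecidableEq ι] (θ : ι → ℝ) (k i j : ι) (t : ℝ) :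
    Function.update θ k t i - Function.update θ k t j
      = θ i - θ j + ((if i = k then 1 else 0) - (if j = k then 1 else 0)) * (t - θ k) := by
  simp only [Function.update_apply]
  split_ifs <;> subst_vars <;> ring

theorem hasDerivAt_V_update {μ θ : Fin 4 → ℝ} (hθ : CollisionFree θ) (k : Fin 4) :
    HasDerivAt (fun t => V μ (Function.update θ k t))
      (-∑ i : Fin 4, ∑ j ∈ Finset.Ioi i, μ i * μ j *
        (pairForce (θ i - θ j) * ((if i = k then 1 else 0) - (if j = k then 1 else 0)))) (θ k) := by
  refine .neg (.fun_sum fun i _ => .fun_sum fun j hj => .const_mul _ ?_)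
  set c : ℝ := (if i = k then 1 else 0) - (if j = k then 1 else 0)
  have harg : HasDerivAt (fun t => θ i - θ j + c * (t - θ k)) c (θ k) := by
    simpa using ((hasDerivAt_id (θ k)).sub_const (θ k)).const_mul c |>.const_add (θ i - θ j)
  have hF : HasDerivAt pairPotential (pairForce (θ i - θ j)) (θ i - θ j + c * (θ k - θ k)) := by
    rw [sub_self, mul_zero, add_zero]
    exact hasDerivAt_pairPotential (hθ i j (Finset.mem_Ioi.1 hj).ne)
  change HasDerivAt (fun t => pairPotential (Function.update θ k t i - Function.update θ k t j)) _ _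
  simp only [update_sub_update]
  exact hF.comp (θ k) harg

theorem sin_ne_zero_of_mem_Ioo_of_ne_pi {θ : ℝ} (hθ : θ ∈ Set.Ioo 0 (2 * π)) (hπ : θ ≠ π) :
    sin θ ≠ 0 := by
  rw [← neg_ne_zero, ← sin_sub_pi, Ne,
    sin_eq_zero_iff_of_lt_of_lt (by linarith [hθ.1]) (by linarith [hθ.2]), sub_eq_zero]
  exact hπ

theorem kite_collisionFree {θ : ℝ} (hθ : sin θ ≠ 0) : CollisionFree ![0, θ, π, -θ] := by
  have hcos : cos θ ^ 2 < 1 := by nlinarith [sin_sq_add_cos_sq θ, sq_pos_of_ne_zero hθ]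
  intro i j hij
  fin_cases i <;> fin_cases j <;> simp [cos_add, cos_sub] at hij ⊢ <;>
    intro h <;> nlinarith

theorem partialV_kite_zero (μ : Fin 4 → ℝ) {θ : ℝ} (hθ : CollisionFree ![0, θ, π, -θ]) :
    partialV μ ![0, θ, π, -θ] 0 = μ 0 * (μ 1 - μ 3) * pairForce θ := by
  rw [partialV, (hasDerivAt_V_update hθ 0).deriv]
  simp [Fin.sum_univ_four, Fin.sum_univ_three, pairForce_neg, pairForce_pi]
  ring

theorem partialV_kite_two (μ : Fin 4 → ℝ) {θ : ℝ} (hθ : CollisionFree ![0, θ, π, -θ]) :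
    partialV μ ![0, θ, π, -θ] 2 = μ 2 * (μ 1 - μ 3) * pairForce (θ + π) := by
  rw [partialV, (hasDerivAt_V_update hθ 2).deriv]
  simp [Fin.sum_univ_four, show Finset.Ioi (2 : Fin 4) = {3} by decide, pairForce_neg,
    pairForce_pi, pairForce_sub_pi, add_comm π θ]
  ring

theorem kite_equal_circulations_general (μ1 μ2 μ3 μ4 θ2 : ℝ)
    (h1 : μ1 ≠ 0) (h3 : μ3 ≠ 0)
    (hθ : θ2 ∈ Set.Ioo (0 : ℝ) (2 * π)) (hθπ : θ2 ≠ π)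
    (hcrit : IsCriticalPt ![μ1, μ2, μ3, μ4] ![0, θ2, π, -θ2]) :
    μ2 = μ4 := by
  have hsin := sin_ne_zero_of_mem_Ioo_of_ne_pi hθ hθπ
  have hfree := kite_collisionFree hsin
  have h0 := partialV_kite_zero ![μ1, μ2, μ3, μ4] hfree ▸ hcrit 0
  have h2 := partialV_kite_two ![μ1, μ2, μ3, μ4] hfree ▸ hcrit 2
  by_contra hne
  have hne' : μ2 - μ4 ≠ 0 := sub_ne_zero.2 hne
  exact hsin <| sin_eq_zero_of_pairForce_eq_zero
    ((mul_eq_zero.1 h0).resolve_left (mul_ne_zero h1 hne'))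
    ((mul_eq_zero.1 h2).resolve_left (mul_ne_zero h3 hne'))

/-- Kites: if `(0, theta2, pi, -theta2)` is a critical point of `V`, then the
two vortices off the axis of symmetry have equal circulation: `mu2 = mu4`. -/
theorem kite_equal_circulations (μ1 μ2 μ3 μ4 θ2 : ℝ)
    (h1 : μ1 ≠ 0) (h2 : μ2 ≠ 0) (h3 : μ3 ≠ 0) (h4 : μ4 ≠ 0)
    (hθ : θ2 ∈ Set.Ioo (0 : ℝ) (2 * π)) (hθπ : θ2 ≠ π)
    (hcrit : IsCriticalPt ![μ1, μ2, μ3, μ4] ![0, θ2, π, -θ2]) :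
    μ2 = μ4 :=
  kite_equal_circulations_general μ1 μ2 μ3 μ4 θ2 h1 h3 hθ hθπ hcrit
end

section
/- Let μ1, μ2, μ3, μ4 be nonzero real numbers and let θ2 ∈ ℝ be such that the four angles 0, θ2, 2θ2, 3θ2 are pairwise distinct modulo 2π. If (0, θ2, 2θ2, 3θ2) is a critical point of V, then μ1² − μ1 μ3 + μ2 μ4 − μ4² = 0. -/
/-!
Differentiating `V` pair by pair, the `k`-th partial derivative is
`μ k * ∑ j, μ j * g (θ k - θ j)` with the odd pair force `g x = sin x * (1 - 1 / (2 - 2 cos x))`.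
For the equally spaced configuration the equations of the two middle vortices read
`(μ1 - μ3) g θ = μ4 g (2θ)` and `μ1 g (2θ) = (μ4 - μ2) g θ`; eliminating `g (2θ)` leaves
`(μ1² - μ1 μ3 + μ2 μ4 - μ4²) g θ = 0`. Finally `g θ ≠ 0`: otherwise `cos θ = 1/2`, so
`g (2θ) = (2/3) sin θ ≠ 0`, contradicting the first equation.
-/

open Real Polynomial

open Finset Function

noncomputable def vortexPairPotential (x : ℝ) : ℝ :=
  cos x + 1 / 2 * log (2 - 2 * cos x)

noncomputable def vortexPairForce (x : ℝ) : ℝ :=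
  sin x * (1 - 1 / (2 - 2 * cos x))

@[simp]
lemma vortexPairForce_zero : vortexPairForce 0 = 0 := by
  simp [vortexPairForce]

@[simp]
lemma vortexPairForce_neg (x : ℝ) : vortexPairForce (-x) = -vortexPairForce x := by
  simp [vortexPairForce, neg_mul]

lemma vortexPairForce_eq_zero_iff {x : ℝ} (hx : cos x ≠ 1) :
    vortexPairForce x = 0 ↔ sin x = 0 ∨ cos x = 1 / 2 := by
  have hne : 2 - 2 * cos x ≠ 0 := fun h => hx (by linarith)
  rw [vortexPairForce, mul_eq_zero, sub_eq_zero, eq_div_iff hne, one_mul]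
  exact or_congr_right ⟨fun h => by linarith, fun h => by linarith⟩

lemma vortexPairForce_two_mul_ne_zero {x : ℝ} (h1 : cos x ≠ 1) (h2 : cos (2 * x) ≠ 1)
    (hx : vortexPairForce x = 0) : vortexPairForce (2 * x) ≠ 0 := by
  have hcos : cos x = 1 / 2 := by
    refine ((vortexPairForce_eq_zero_iff h1).1 hx).resolve_left fun hs => ?_
    exact h2 (by rw [cos_two_mul, cos_sq', hs]; ring)
  have hsin : sin (2 * x) = sin x := by rw [sin_two_mul, hcos]; ring
  have hcos2 : cos (2 * x) = -(1 / 2) := by rw [cos_two_mul, hcos]; norm_num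
  have hsin0 : sin x ≠ 0 := fun hs => by nlinarith [sin_sq_add_cos_sq x]
  rw [vortexPairForce, hsin, hcos2]
  norm_num [hsin0]

lemma hasDerivAt_vortexPairPotential {x : ℝ} (hx : cos x ≠ 1) :
    HasDerivAt vortexPairPotential (-vortexPairForce x) x := by
  have hne : 2 - 2 * cos x ≠ 0 := fun h => hx (by linarith)
  have hlog : HasDerivAt (fun y => log (2 - 2 * cos y)) (2 * sin x / (2 - 2 * cos x)) x := by
    simpa using (((hasDerivAt_cos x).const_mul 2).const_sub 2).log hne
  refine ((hasDerivAt_cos x).add (hlog.const_mul (1 / 2))).congr_deriv ?_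
  rw [vortexPairForce]
  field_simp
  ring

lemma hasDerivAt_vortexPairPotential_update {n : ℕ} (θ : Fin n → ℝ) {i j : Fin n}
    (hij : cos (θ i - θ j) ≠ 1) (k : Fin n) :
    HasDerivAt (fun t => vortexPairPotential (update θ k t i - update θ k t j))
      (-vortexPairForce (θ i - θ j) *
        ((Pi.single k 1 : Fin n → ℝ) i - (Pi.single k 1 : Fin n → ℝ) j)) (θ k) := by
  have hupd := hasDerivAt_pi.1 (hasDerivAt_update θ k (θ k))
  exact (hasDerivAt_vortexPairPotential hij).comp_of_eq (θ k) ((hupd i).sub (hupd j)) (by simp)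

lemma sum_Ioi_mul_single_sub_single {n : ℕ} (c : Fin n → Fin n → ℝ)
    (hc : ∀ i j, c j i = -c i j) (k : Fin n) :
    ∑ i, ∑ j ∈ Ioi i, c i j * ((Pi.single k 1 : Fin n → ℝ) i - (Pi.single k 1 : Fin n → ℝ) j)
      = ∑ j, c k j := by
  simp only [Pi.single_apply, mul_sub, mul_ite, mul_one, mul_zero, sum_sub_distrib,
    sum_ite_irrel, sum_const_zero, sum_ite_eq', mem_Ioi, mem_univ, if_true]
  rw [← filter_lt_eq_Ioi, sum_filter, ← sum_sub_distrib]
  refine sum_congr rfl fun j _ => ?_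
  rcases lt_trichotomy j k with h | rfl | h
  · simp [h, h.not_gt, hc j k]
  · linarith [hc j j]
  · simp [h, h.not_gt]

theorem partialV_eq (μ θ : Fin 4 → ℝ) (hθ : ∀ i j, i ≠ j → cos (θ i - θ j) ≠ 1) (k : Fin 4) :
    partialV μ θ k = μ k * ∑ j, μ j * vortexPairForce (θ k - θ j) := by
  have hV : HasDerivAt (fun t => V μ (update θ k t))
      (-∑ i, ∑ j ∈ Ioi i, μ i * μ j * (-vortexPairForce (θ i - θ j) *
        ((Pi.single k 1 : Fin 4 → ℝ) i - (Pi.single k 1 : Fin 4 → ℝ) j))) (θ k) :=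
    (HasDerivAt.fun_sum fun i _ => HasDerivAt.fun_sum fun j hj =>
      (hasDerivAt_vortexPairPotential_update θ (hθ i j (mem_Ioi.1 hj).ne) k).const_mul
        (μ i * μ j)).neg
  rw [partialV, hV.deriv, mul_sum]
  convert sum_Ioi_mul_single_sub_single (fun i j => μ i * μ j * vortexPairForce (θ i - θ j)) _ k
    using 1
  · simp only [neg_mul, mul_neg, sum_neg_distrib, neg_neg, mul_assoc]
  · simp only [mul_assoc]
  · intro i j
    rw [← neg_sub, vortexPairForce_neg]
    ring

lemma partialV_equallySpaced (μ1 μ2 μ3 μ4 θ : ℝ)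
    (hθ : ∀ i j, i ≠ j → cos ((![0, θ, 2 * θ, 3 * θ] : Fin 4 → ℝ) i -
      (![0, θ, 2 * θ, 3 * θ] : Fin 4 → ℝ) j) ≠ 1) :
    partialV ![μ1, μ2, μ3, μ4] ![0, θ, 2 * θ, 3 * θ] 1
        = μ2 * ((μ1 - μ3) * vortexPairForce θ - μ4 * vortexPairForce (2 * θ)) ∧
      partialV ![μ1, μ2, μ3, μ4] ![0, θ, 2 * θ, 3 * θ] 2
        = μ3 * (μ1 * vortexPairForce (2 * θ) + (μ2 - μ4) * vortexPairForce θ) := by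
  simp only [partialV_eq _ _ hθ, Fin.sum_univ_four, Matrix.cons_val_zero, Matrix.cons_val_one,
    Matrix.cons_val, sub_zero, sub_self, vortexPairForce_zero, mul_zero, add_zero,
    show θ - 2 * θ = -θ by ring, show θ - 3 * θ = -(2 * θ) by ring, show 2 * θ - θ = θ by ring,
    show 2 * θ - 3 * θ = -θ by ring, vortexPairForce_neg]
  constructor <;> ring

theorem trapezoid_f1_general (μ1 μ2 μ3 μ4 θ2 : ℝ)
    (h2 : μ2 ≠ 0) (h3 : μ3 ≠ 0) (h4 : μ4 ≠ 0)
    (hdist : ∀ i j : Fin 4, i ≠ j → ∀ n : ℤ,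
      (![0, θ2, 2 * θ2, 3 * θ2] : Fin 4 → ℝ) i -
        (![0, θ2, 2 * θ2, 3 * θ2] : Fin 4 → ℝ) j ≠ 2 * π * n)
    (hcrit : IsCriticalPt ![μ1, μ2, μ3, μ4] ![0, θ2, 2 * θ2, 3 * θ2]) :
    μ1 ^ 2 - μ1 * μ3 + μ2 * μ4 - μ4 ^ 2 = 0 := by
  have hcos : ∀ i j : Fin 4, i ≠ j → cos ((![0, θ2, 2 * θ2, 3 * θ2] : Fin 4 → ℝ) i -
      (![0, θ2, 2 * θ2, 3 * θ2] : Fin 4 → ℝ) j) ≠ 1 := fun i j hij hc => by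
    obtain ⟨n, hn⟩ := (cos_eq_one_iff _).1 hc
    exact hdist i j hij n (by rw [← hn]; ring)
  obtain ⟨hpartial1, hpartial2⟩ := partialV_equallySpaced μ1 μ2 μ3 μ4 θ2 hcos
  have hE1 := (mul_eq_zero.1 (hpartial1.symm.trans (hcrit 1))).resolve_left h2
  have hE2 := (mul_eq_zero.1 (hpartial2.symm.trans (hcrit 2))).resolve_left h3
  have hforce : vortexPairForce θ2 ≠ 0 := fun h0 => by
    refine vortexPairForce_two_mul_ne_zero (by simpa using hcos 1 0 (by decide))
      (by simpa using hcos 2 0 (by decide)) h0 ?_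
    rw [h0] at hE1
    simpa [h4] using hE1
  have key : (μ1 ^ 2 - μ1 * μ3 + μ2 * μ4 - μ4 ^ 2) * vortexPairForce θ2 = 0 := by
    linear_combination μ1 * hE1 + μ4 * hE2
  exact (mul_eq_zero.1 key).resolve_right hforce

/-- Equally spaced configurations: the first Groebner basis relation
`mu1^2 - mu1*mu3 + mu2*mu4 - mu4^2 = 0` must hold. -/
theorem trapezoid_f1 (μ1 μ2 μ3 μ4 θ2 : ℝ)
    (h1 : μ1 ≠ 0) (h2 : μ2 ≠ 0) (h3 : μ3 ≠ 0) (h4 : μ4 ≠ 0)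
    (hdist : ∀ i j : Fin 4, i ≠ j → ∀ n : ℤ,
      (![0, θ2, 2 * θ2, 3 * θ2] : Fin 4 → ℝ) i -
        (![0, θ2, 2 * θ2, 3 * θ2] : Fin 4 → ℝ) j ≠ 2 * π * n)
    (hcrit : IsCriticalPt ![μ1, μ2, μ3, μ4] ![0, θ2, 2 * θ2, 3 * θ2]) :
    μ1 ^ 2 - μ1 * μ3 + μ2 * μ4 - μ4 ^ 2 = 0 :=
  trapezoid_f1_general μ1 μ2 μ3 μ4 θ2 h2 h3 h4 hdist hcrit
end
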